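/- arXiv:1311.5479 — 3 statements merged into one kernel-verified Lean document; each statement's English description precedes it below -/
import Mathlib

section
/- Let μ be a σ-finite measure on a measurable space 𝒳 and T : 𝒳 → ℝ^d measurable. Let A(θ) = log ∫ exp(⟨θ, T(x)⟩) dμ(x) and suppose θ₀ lies in the interior of the set {θ ∈ ℝ^d : ∫ exp(⟨θ, T(x)⟩) dμ(x) < ∞}. Then A is twice differentiable at θ₀ and its second partial derivatives are given by the covariance of the sufficient statistics under the tilted probability measure: ∂²A/∂θ_j∂θ_k (θ₀) = E_{θ₀}[T_j T_k] − E_{θ₀}[T_j]·E_{θ₀}[T_k], where E_{θ₀}[f] = ∫ f(x) exp(⟨θ₀, T(x)⟩ − A(θ₀)) dμ(x). (This is the second-derivative identity of Proposition 1.) -/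
/-!
Near `θ₀` the integrands `f x * exp (θ ⬝ᵥ T x)`, for `|f|` bounded by a polynomial in `‖T x‖`,
admit one integrable majorant: if the cube `θ₀ + [-δ, δ]^d` lies in the natural parameter set,
the vertex `θ₀ + σ` whose signs match those of `T x` gives `θ₀ ⬝ᵥ T x + δ ∑ⱼ |T x j|`, and half
of this margin absorbs both the polynomial and the shift from `θ₀` to any `θ` within `δ / 2`.
Hence these moments may be differentiated under the integral sign, `∇ ∫ f e^{θ⬝T} = ∫ T f e^{θ⬝T}`,
and the quotient rule gives `∇A = E_θ[T]` and `∂ⱼ E_θ[f] = E_θ[Tⱼ f] - E_θ[Tⱼ] E_θ[f]`; the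
Hessian is the case `f = T_k`.
-/

open MeasureTheory Real Metric Filter Topology

theorem one_add_pow_le_mul_exp (n : ℕ) {c : ℝ} (hc : 0 < c) :
    ∃ C ≥ 0, ∀ t, 0 ≤ t → (1 + t) ^ n ≤ C * exp (c * t) := by
  set a := c / (n + 1)
  have ha : 0 < a := by positivity
  refine ⟨(1 + a⁻¹) ^ n, by positivity, fun t ht => ?_⟩
  have hlin : 1 + t ≤ (1 + a⁻¹) * exp (a * t) := by
    rw [add_mul, one_mul]
    exact add_le_add (one_le_exp (by positivity)) (le_inv_mul_exp t ha)
  have hna : n * a ≤ c := by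
    rw [show (n : ℝ) * a = c * (n / (n + 1)) by ring]
    exact mul_le_of_le_one_right hc.le (div_le_one_of_le₀ (by linarith) (by positivity))
  calc (1 + t) ^ n ≤ ((1 + a⁻¹) * exp (a * t)) ^ n := by gcongr
    _ = (1 + a⁻¹) ^ n * exp (n * a * t) := by rw [mul_pow, ← exp_nat_mul, mul_assoc]
    _ ≤ (1 + a⁻¹) ^ n * exp (c * t) := by gcongr

section DotProduct

variable {ι : Type*} [Fintype ι]

noncomputable def dotProductCLM (c : ι → ℝ) : (ι → ℝ) →L[ℝ] ℝ :=
  ∑ j, c j • ContinuousLinearMap.proj j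

@[simp]
theorem dotProductCLM_apply (c v : ι → ℝ) : dotProductCLM c v = c ⬝ᵥ v := by
  simp [dotProductCLM, dotProduct]

theorem norm_dotProductCLM_le (c : ι → ℝ) : ‖dotProductCLM c‖ ≤ Fintype.card ι * ‖c‖ :=
  ContinuousLinearMap.opNorm_le_bound _ (by positivity) fun v => by
    rw [dotProductCLM_apply, Real.norm_eq_abs]
    calc |c ⬝ᵥ v| ≤ ∑ j, |c j * v j| := Finset.abs_sum_le_sum_abs _ _
      _ = ∑ j, ‖c j‖ * ‖v j‖ := by simp only [abs_mul, Real.norm_eq_abs]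
      _ ≤ ∑ _j : ι, ‖c‖ * ‖v‖ := by
          gcongr with j
          exacts [norm_le_pi_norm c j, norm_le_pi_norm v j]
      _ = Fintype.card ι * ‖c‖ * ‖v‖ := by simp [mul_assoc]

theorem continuous_dotProductCLM : Continuous (dotProductCLM : (ι → ℝ) → (ι → ℝ) →L[ℝ] ℝ) :=
  continuous_finsetSum _ fun j _ => (continuous_apply j).smul continuous_const

theorem hasFDerivAt_dotProduct_left (v θ : ι → ℝ) :
    HasFDerivAt (fun θ => θ ⬝ᵥ v) (dotProductCLM v) θ := by
  have : (fun θ => θ ⬝ᵥ v) = dotProductCLM v := funext fun θ => by simp [dotProduct_comm]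
  exact this ▸ (dotProductCLM v).hasFDerivAt

theorem hasFDerivAt_mul_exp_dotProduct (a : ℝ) (v θ : ι → ℝ) :
    HasFDerivAt (fun θ => a * exp (θ ⬝ᵥ v)) ((a * exp (θ ⬝ᵥ v)) • dotProductCLM v) θ := by
  simpa only [smul_smul] using (hasFDerivAt_dotProduct_left v θ).exp.const_mul a

theorem differentiableAt_dotProductCLM {E : Type*} [NormedAddCommGroup E] [NormedSpace ℝ E]
    {c : E → ι → ℝ} {x : E} (hc : ∀ j, DifferentiableAt ℝ (fun y => c y j) x) :
    DifferentiableAt ℝ (fun y => dotProductCLM (c y)) x :=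
  DifferentiableAt.fun_sum fun j _ => (hc j).smul_const _

theorem integral_smul_dotProductCLM {Ω : Type*} [MeasurableSpace Ω] {μ : Measure Ω}
    {F : Ω → ℝ} {c : Ω → ι → ℝ} (h : ∀ j, Integrable (fun x => F x * c x j) μ) :
    ∫ x, F x • dotProductCLM (c x) ∂μ = dotProductCLM fun j => ∫ x, F x * c x j ∂μ := by
  simp only [dotProductCLM, Finset.smul_sum, smul_smul]
  rw [integral_finsetSum _ fun j _ => (h j).smul_const _]
  simp only [integral_smul_const]

theorem abs_apply_le_one_add_norm (v : ι → ℝ) (j : ι) : |v j| ≤ 1 + ‖v‖ := by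
  have := norm_le_pi_norm v j
  rw [Real.norm_eq_abs] at this
  linarith

theorem abs_apply_mul_le_pow_succ (v : ι → ℝ) {a : ℝ} {n : ℕ} (ha : |a| ≤ (1 + ‖v‖) ^ n)
    (j : ι) : |v j * a| ≤ (1 + ‖v‖) ^ (n + 1) := by
  rw [abs_mul, pow_succ']
  exact mul_le_mul (abs_apply_le_one_add_norm v j) ha (abs_nonneg _) (by positivity)

theorem dotProduct_le_add_mul_sum_abs {θ θ₀ : ι → ℝ} {r : ℝ} (h : ‖θ - θ₀‖ ≤ r) (v : ι → ℝ) :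
    θ ⬝ᵥ v ≤ θ₀ ⬝ᵥ v + r * ∑ j, |v j| := by
  have hj : ∀ j, (θ - θ₀) j * v j ≤ r * |v j| := fun j =>
    calc (θ - θ₀) j * v j ≤ |(θ - θ₀) j| * |v j| := by rw [← abs_mul]; exact le_abs_self _
      _ ≤ r * |v j| := by
        gcongr
        simpa only [Real.norm_eq_abs] using (norm_le_pi_norm (θ - θ₀) j).trans h
  calc θ ⬝ᵥ v = θ₀ ⬝ᵥ v + (θ - θ₀) ⬝ᵥ v := by rw [sub_dotProduct, add_sub_cancel]
    _ ≤ θ₀ ⬝ᵥ v + r * ∑ j, |v j| := by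
      rw [Finset.mul_sum]
      exact (add_le_add_iff_left _).mpr (Finset.sum_le_sum fun j _ => hj j)

theorem exp_dotProduct_add_le_sum_piFinset [DecidableEq ι] (θ v : ι → ℝ) (δ : ℝ) :
    exp (θ ⬝ᵥ v + δ * ∑ j, |v j|) ≤
      ∑ σ ∈ Fintype.piFinset fun _ : ι => ({-δ, δ} : Finset ℝ), exp ((θ + σ) ⬝ᵥ v) := by
  set σ : ι → ℝ := fun j => if 0 ≤ v j then δ else -δ
  have hσ : σ ⬝ᵥ v = δ * ∑ j, |v j| := by
    rw [Finset.mul_sum]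
    refine Finset.sum_congr rfl fun j _ => ?_
    by_cases h : 0 ≤ v j
    · simp [σ, h, abs_of_nonneg h]
    · simp [σ, h, abs_of_neg (not_le.mp h)]
  have hmem : σ ∈ Fintype.piFinset fun _ : ι => ({-δ, δ} : Finset ℝ) :=
    Fintype.mem_piFinset.mpr fun j => by by_cases h : 0 ≤ v j <;> simp [σ, h]
  calc exp (θ ⬝ᵥ v + δ * ∑ j, |v j|) = exp ((θ + σ) ⬝ᵥ v) := by rw [add_dotProduct, hσ]
    _ ≤ _ := Finset.single_le_sum (f := fun σ => exp ((θ + σ) ⬝ᵥ v))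
      (fun _ _ => (exp_pos _).le) hmem

end DotProduct

section ExponentialFamily

variable {𝒳 ι : Type*} [MeasurableSpace 𝒳] [Fintype ι]

def naturalParamSet (μ : Measure 𝒳) (T : 𝒳 → ι → ℝ) : Set (ι → ℝ) :=
  {θ | Integrable (fun x => exp (θ ⬝ᵥ T x)) μ}

noncomputable def expMoment (μ : Measure 𝒳) (T : 𝒳 → ι → ℝ) (f : 𝒳 → ℝ) (θ : ι → ℝ) : ℝ :=
  ∫ x, f x * exp (θ ⬝ᵥ T x) ∂μ

noncomputable def logPartition (μ : Measure 𝒳) (T : 𝒳 → ι → ℝ) (θ : ι → ℝ) : ℝ :=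
  log (expMoment μ T 1 θ)

noncomputable def tiltedMean (μ : Measure 𝒳) (T : 𝒳 → ι → ℝ) (f : 𝒳 → ℝ) (θ : ι → ℝ) : ℝ :=
  expMoment μ T f θ / expMoment μ T 1 θ

variable {μ : Measure 𝒳} {T : 𝒳 → ι → ℝ}

theorem exists_integrable_bound_of_mem_interior {θ₀ : ι → ℝ}
    (hθ₀ : θ₀ ∈ interior (naturalParamSet μ T)) (n : ℕ) :
    ∃ g : 𝒳 → ℝ, Integrable g μ ∧
      ∀ᶠ θ in 𝓝 θ₀, ∀ x, (1 + ‖T x‖) ^ n * exp (θ ⬝ᵥ T x) ≤ g x := by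
  classical
  obtain ⟨δ, hδ, hball⟩ :=
    nhds_basis_closedBall.mem_iff.mp (mem_interior_iff_mem_nhds.mp hθ₀)
  obtain ⟨C, hC, hpoly⟩ := one_add_pow_le_mul_exp n (half_pos hδ)
  let vertices := Fintype.piFinset fun _ : ι => ({-δ, δ} : Finset ℝ)
  refine ⟨fun x => C * ∑ σ ∈ vertices, exp ((θ₀ + σ) ⬝ᵥ T x), ?_, ?_⟩
  · refine (integrable_finsetSum _ fun σ hσ => hball ?_).const_mul C
    rw [mem_closedBall, dist_eq_norm, add_sub_cancel_left, pi_norm_le_iff_of_nonneg hδ.le]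
    intro j
    rcases Finset.mem_insert.mp (Fintype.mem_piFinset.mp hσ j) with h | h <;>
      simp_all [abs_of_pos hδ]
  · filter_upwards [closedBall_mem_nhds θ₀ (half_pos hδ)] with θ hθ x
    set N := ∑ j, |T x j|
    have hN : ‖T x‖ ≤ N := (pi_norm_le_iff_of_nonneg (by positivity)).mpr fun j =>
      Finset.single_le_sum (f := fun j => |T x j|) (fun j _ => abs_nonneg _) (Finset.mem_univ j)
    calc (1 + ‖T x‖) ^ n * exp (θ ⬝ᵥ T x)
        ≤ (C * exp (δ / 2 * N)) * exp (θ₀ ⬝ᵥ T x + δ / 2 * N) := by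
          gcongr
          · exact (pow_le_pow_left₀ (by positivity) (by linarith) n).trans
              (hpoly N (by positivity))
          · exact dotProduct_le_add_mul_sum_abs (by rwa [← dist_eq_norm]) (T x)
      _ = C * exp (θ₀ ⬝ᵥ T x + δ * N) := by rw [mul_assoc, ← exp_add]; ring_nf
      _ ≤ C * ∑ σ ∈ vertices, exp ((θ₀ + σ) ⬝ᵥ T x) := by
          gcongr
          exact exp_dotProduct_add_le_sum_piFinset θ₀ (T x) δ

theorem aestronglyMeasurable_exp_dotProduct (hT : AEMeasurable T μ) (θ : ι → ℝ) :
    AEStronglyMeasurable (fun x => exp (θ ⬝ᵥ T x)) μ :=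
  ((by fun_prop : Measurable fun v : ι → ℝ => exp (θ ⬝ᵥ v)).comp_aemeasurable
    hT).aestronglyMeasurable

theorem integrable_mul_exp_dotProduct (hT : AEMeasurable T μ) {f : 𝒳 → ℝ}
    (hf : AEStronglyMeasurable f μ) {n : ℕ} (hfT : ∀ x, |f x| ≤ (1 + ‖T x‖) ^ n)
    {θ₀ : ι → ℝ} (hθ₀ : θ₀ ∈ interior (naturalParamSet μ T)) :
    Integrable (fun x => f x * exp (θ₀ ⬝ᵥ T x)) μ := by
  obtain ⟨g, hg, hbound⟩ := exists_integrable_bound_of_mem_interior hθ₀ n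
  refine hg.mono' (hf.mul (aestronglyMeasurable_exp_dotProduct hT θ₀)) (ae_of_all _ fun x => ?_)
  rw [norm_mul, Real.norm_eq_abs, Real.norm_of_nonneg (exp_pos _).le]
  exact (mul_le_mul_of_nonneg_right (hfT x) (exp_pos _).le).trans (hbound.self_of_nhds x)

theorem hasFDerivAt_expMoment (hT : AEMeasurable T μ) {f : 𝒳 → ℝ}
    (hf : AEStronglyMeasurable f μ) {n : ℕ} (hfT : ∀ x, |f x| ≤ (1 + ‖T x‖) ^ n)
    {θ₀ : ι → ℝ} (hθ₀ : θ₀ ∈ interior (naturalParamSet μ T)) :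
    HasFDerivAt (expMoment μ T f)
      (dotProductCLM fun j => expMoment μ T (fun x => T x j * f x) θ₀) θ₀ := by
  obtain ⟨g, hg, hbound⟩ := exists_integrable_bound_of_mem_interior hθ₀ (n + 1)
  have hnorm : ∀ᶠ θ in 𝓝 θ₀, ∀ x,
      ‖(f x * exp (θ ⬝ᵥ T x)) • dotProductCLM (T x)‖ ≤ Fintype.card ι * g x := by
    filter_upwards [hbound] with θ hθ x
    rw [norm_smul, norm_mul, Real.norm_eq_abs, Real.norm_of_nonneg (exp_pos _).le]
    calc |f x| * exp (θ ⬝ᵥ T x) * ‖dotProductCLM (T x)‖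
        ≤ (1 + ‖T x‖) ^ n * exp (θ ⬝ᵥ T x) * (Fintype.card ι * (1 + ‖T x‖)) := by
          gcongr
          · exact hfT x
          · exact (norm_dotProductCLM_le (T x)).trans (by gcongr; linarith)
      _ = Fintype.card ι * ((1 + ‖T x‖) ^ (n + 1) * exp (θ ⬝ᵥ T x)) := by ring
      _ ≤ Fintype.card ι * g x := by gcongr; exact hθ x
  obtain ⟨s, hs, hs_norm⟩ := hnorm.exists_mem
  have hTj : ∀ j, AEStronglyMeasurable (fun x => T x j) μ := fun j =>
    ((measurable_pi_apply j).comp_aemeasurable hT).aestronglyMeasurable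
  have hmoment : ∀ j, Integrable (fun x => f x * exp (θ₀ ⬝ᵥ T x) * T x j) μ := fun j =>
    (integrable_mul_exp_dotProduct hT (f := fun x => T x j * f x) ((hTj j).mul hf)
      (fun x => abs_apply_mul_le_pow_succ (T x) (hfT x) j) hθ₀).congr
      (ae_of_all _ fun x => by ring)
  have := hasFDerivAt_integral_of_dominated_of_fderiv_le
    (F := fun θ x => f x * exp (θ ⬝ᵥ T x)) hs
    (Eventually.of_forall fun θ => hf.mul (aestronglyMeasurable_exp_dotProduct hT θ))
    (integrable_mul_exp_dotProduct hT hf hfT hθ₀)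
    ((hf.mul (aestronglyMeasurable_exp_dotProduct hT θ₀)).smul
      (continuous_dotProductCLM.comp_aestronglyMeasurable hT.aestronglyMeasurable))
    (ae_of_all _ fun x θ hθ => hs_norm θ hθ x) (hg.const_mul _)
    (ae_of_all _ fun x θ _ => hasFDerivAt_mul_exp_dotProduct (f x) (T x) θ)
  have hcoeff : (fun j => ∫ x, f x * exp (θ₀ ⬝ᵥ T x) * T x j ∂μ) =
      fun j => expMoment μ T (fun x => T x j * f x) θ₀ :=
    funext fun j => integral_congr_ae (ae_of_all _ fun x => by dsimp only; ring)
  rwa [integral_smul_dotProductCLM hmoment, hcoeff] at this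

theorem expMoment_one_pos [NeZero μ] {θ : ι → ℝ} (hθ : θ ∈ naturalParamSet μ T) :
    0 < expMoment μ T 1 θ := by
  simpa [expMoment] using integral_exp_pos hθ

theorem hasFDerivAt_expMoment_one (hT : AEMeasurable T μ) {θ : ι → ℝ}
    (hθ : θ ∈ interior (naturalParamSet μ T)) :
    HasFDerivAt (expMoment μ T 1) (dotProductCLM fun j => expMoment μ T (fun x => T x j) θ) θ := by
  simpa using hasFDerivAt_expMoment hT (f := 1) aestronglyMeasurable_const (n := 0) (by simp) hθ

theorem hasFDerivAt_logPartition [NeZero μ] (hT : AEMeasurable T μ) {θ : ι → ℝ}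
    (hθ : θ ∈ interior (naturalParamSet μ T)) :
    HasFDerivAt (logPartition μ T) (dotProductCLM fun j => tiltedMean μ T (fun x => T x j) θ) θ :=
  ((hasFDerivAt_expMoment_one hT hθ).log (expMoment_one_pos (interior_subset hθ)).ne').congr_fderiv
    <| by ext v; simp [tiltedMean, dotProduct, Finset.mul_sum, div_eq_inv_mul, mul_assoc]

theorem hasFDerivAt_tiltedMean [NeZero μ] (hT : AEMeasurable T μ) {f : 𝒳 → ℝ}
    (hf : AEStronglyMeasurable f μ) {n : ℕ} (hfT : ∀ x, |f x| ≤ (1 + ‖T x‖) ^ n)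
    {θ : ι → ℝ} (hθ : θ ∈ interior (naturalParamSet μ T)) :
    HasFDerivAt (tiltedMean μ T f)
      (dotProductCLM fun j => tiltedMean μ T (fun x => T x j * f x) θ -
        tiltedMean μ T (fun x => T x j) θ * tiltedMean μ T f θ) θ := by
  have hZ := expMoment_one_pos (interior_subset hθ)
  have := (hasFDerivAt_expMoment hT hf hfT hθ).mul
    ((hasDerivAt_inv hZ.ne').comp_hasFDerivAt θ (hasFDerivAt_expMoment_one hT hθ))
  refine this.congr_fderiv ?_
  ext v
  simp only [add_apply, smul_apply, dotProductCLM_apply,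
    dotProduct, smul_eq_mul, Finset.mul_sum, ← Finset.sum_add_distrib, Function.comp_apply]
  refine Finset.sum_congr rfl fun j _ => ?_
  simp only [tiltedMean]
  field_simp
  ring

theorem tiltedMean_eq_integral [NeZero μ] {θ : ι → ℝ} (hθ : θ ∈ naturalParamSet μ T)
    (f : 𝒳 → ℝ) :
    tiltedMean μ T f θ = ∫ x, f x * exp (θ ⬝ᵥ T x - logPartition μ T θ) ∂μ := by
  rw [tiltedMean, logPartition]
  simp only [exp_sub, exp_log (expMoment_one_pos hθ), ← mul_div_assoc, integral_div]
  rfl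

end ExponentialFamily

theorem stmt_2_general {𝒳 : Type*} [MeasurableSpace 𝒳] (μ : Measure 𝒳)
    {d : ℕ} (T : 𝒳 → Fin d → ℝ) (hT : Measurable T)
    (A : (Fin d → ℝ) → ℝ)
    (hA : ∀ θ, A θ = Real.log (∫ x, Real.exp (∑ j, θ j * T x j) ∂μ))
    (θ₀ : Fin d → ℝ)
    (hθ₀ : θ₀ ∈ interior {θ : Fin d → ℝ |
      Integrable (fun x => Real.exp (∑ j, θ j * T x j)) μ}) :
    DifferentiableAt ℝ A θ₀ ∧
    DifferentiableAt ℝ (fderiv ℝ A) θ₀ ∧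
    ∀ j k, fderiv ℝ (fun θ => fderiv ℝ A θ (Pi.single k 1)) θ₀ (Pi.single j 1) =
      (∫ x, T x j * T x k * Real.exp ((∑ j', θ₀ j' * T x j') - A θ₀) ∂μ) -
      (∫ x, T x j * Real.exp ((∑ j', θ₀ j' * T x j') - A θ₀) ∂μ) *
      (∫ x, T x k * Real.exp ((∑ j', θ₀ j' * T x j') - A θ₀) ∂μ) := by
  obtain rfl : A = logPartition μ T :=
    funext fun θ => by simp only [hA, logPartition, expMoment, Pi.one_apply, one_mul]; rfl
  rcases eq_zero_or_neZero μ with rfl | hμ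
  · have h0 : logPartition (0 : Measure 𝒳) T = fun _ => 0 :=
      funext fun θ => by simp [logPartition, expMoment]
    simp [h0]
  have hθ₀' : θ₀ ∈ interior (naturalParamSet μ T) := hθ₀
  have hmean : ∀ k, HasFDerivAt (tiltedMean μ T fun x => T x k) _ θ₀ := fun k =>
    hasFDerivAt_tiltedMean hT.aemeasurable
      ((measurable_pi_apply k).comp hT).aestronglyMeasurable (n := 1)
      (fun x => by simpa using abs_apply_le_one_add_norm (T x) k) hθ₀'
  have hfderiv : fderiv ℝ (logPartition μ T) =ᶠ[𝓝 θ₀]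
      fun θ => dotProductCLM fun j => tiltedMean μ T (fun x => T x j) θ :=
    eventually_of_mem (isOpen_interior.mem_nhds hθ₀') fun θ hθ =>
      (hasFDerivAt_logPartition hT.aemeasurable hθ).fderiv
  refine ⟨(hasFDerivAt_logPartition hT.aemeasurable hθ₀').differentiableAt,
    (differentiableAt_dotProductCLM fun k => (hmean k).differentiableAt).congr_of_eventuallyEq
      hfderiv, fun j k => ?_⟩
  have hpartial : (fun θ => fderiv ℝ (logPartition μ T) θ (Pi.single k 1)) =ᶠ[𝓝 θ₀]
      tiltedMean μ T fun x => T x k :=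
    hfderiv.mono fun θ hθ => by simp [hθ]
  rw [hpartial.fderiv_eq, (hmean k).fderiv]
  simp only [dotProductCLM_apply, dotProduct_single_one,
    tiltedMean_eq_integral (interior_subset hθ₀')]
  rfl

/-- Second-derivative identity of Proposition 1: at an interior point of the natural parameter
domain, the log-partition function `A` is twice differentiable and its second partial
derivatives equal the covariance of the sufficient statistics under the tilted measure. -/
theorem stmt_2 {𝒳 : Type*} [MeasurableSpace 𝒳] (μ : Measure 𝒳) [SigmaFinite μ]
    {d : ℕ} (T : 𝒳 → Fin d → ℝ) (hT : Measurable T)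
    (A : (Fin d → ℝ) → ℝ)
    (hA : ∀ θ, A θ = Real.log (∫ x, Real.exp (∑ j, θ j * T x j) ∂μ))
    (θ₀ : Fin d → ℝ)
    (hθ₀ : θ₀ ∈ interior {θ : Fin d → ℝ |
      Integrable (fun x => Real.exp (∑ j, θ j * T x j)) μ}) :
    DifferentiableAt ℝ A θ₀ ∧
    DifferentiableAt ℝ (fderiv ℝ A) θ₀ ∧
    ∀ j k, fderiv ℝ (fun θ => fderiv ℝ A θ (Pi.single k 1)) θ₀ (Pi.single j 1) =
      (∫ x, T x j * T x k * Real.exp ((∑ j', θ₀ j' * T x j') - A θ₀) ∂μ) -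
      (∫ x, T x j * Real.exp ((∑ j', θ₀ j' * T x j') - A θ₀) ∂μ) *
      (∫ x, T x k * Real.exp ((∑ j', θ₀ j' * T x j') - A θ₀) ∂μ) :=
  stmt_2_general μ T hT A hA θ₀ hθ₀
end

section
/- Let L : ℝ^d → ℝ be convex and differentiable, let θ* ∈ ℝ^d, let S ⊆ {1,…,d} contain the support of θ* (the set of nonzero coordinates of θ*), and let λ ≥ 2‖∇L(θ*)‖_∞ with λ > 0. If θ̂ is a global minimizer of θ ↦ L(θ) + λ‖θ‖₁, then the error vector Δ = θ̂ − θ* lies in the cone C_S, i.e. ‖Δ_{S̄}‖₁ ≤ 3‖Δ_S‖₁, where Δ_S denotes the restriction of Δ to the coordinates in S, S̄ is the complement of S, and ‖·‖₁ is the ℓ₁-norm. (This is the cone-condition claim established in the proof of Lemma 3.) -/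
/-!
Convexity gives `L θ̂ ≥ L θ* + ∇L(θ*)·Δ ≥ L θ* - (λ/2)‖Δ‖₁` (Hölder with `‖∇L(θ*)‖_∞ ≤ λ/2`), so
comparing the objective at `θ̂` and `θ*` yields `λ‖θ̂‖₁ ≤ λ‖θ*‖₁ + (λ/2)‖Δ‖₁`. As `θ*` vanishes
off `S`, the triangle inequality on `S` gives `‖θ̂‖₁ ≥ ‖θ*‖₁ - ‖Δ_S‖₁ + ‖Δ_{S̄}‖₁`, and the two
bounds combine to `‖Δ_{S̄}‖₁ - ‖Δ_S‖₁ ≤ (‖Δ_S‖₁ + ‖Δ_{S̄}‖₁) / 2`.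
-/

theorem ConvexOn.add_le_of_hasFDerivAt {E : Type*} [NormedAddCommGroup E] [NormedSpace ℝ E]
    {s : Set E} {L : E → ℝ} {L' : E →L[ℝ] ℝ} {x y : E} (hL : ConvexOn ℝ s L)
    (hx : x ∈ s) (hy : y ∈ s) (hL' : HasFDerivAt L L' x) :
    L x + L' (y - x) ≤ L y := by
  set φ : ℝ →ᵃ[ℝ] E := AffineMap.lineMap x y
  have hline : ConvexOn ℝ (φ ⁻¹' s) (L ∘ φ) := hL.comp_affineMap φ
  have hderiv : HasDerivAt (L ∘ φ) (L' (y - x)) 0 :=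
    (by simpa [φ] using hL' : HasFDerivAt L L' (φ 0)).comp_hasDerivAt 0
      AffineMap.hasDerivAt_lineMap
  have hslope : L' (y - x) ≤ L y - L x := by
    simpa [φ, slope_def_field] using
      hline.le_slope_of_hasDerivAt (by simpa [φ] using hx) (by simpa [φ] using hy) one_pos hderiv
  linarith

theorem LinearMap.abs_apply_le_mul_sum_abs {ι : Type*} [Fintype ι] [DecidableEq ι]
    (f : (ι → ℝ) →ₗ[ℝ] ℝ) {c : ℝ} (hf : ∀ j, |f (Pi.single j 1)| ≤ c) (v : ι → ℝ) :
    |f v| ≤ c * ∑ j, |v j| := by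
  have hexpand : f v = ∑ j, v j * f (Pi.single j 1) := by
    conv_lhs => rw [pi_eq_sum_univ' v]
    simp only [map_sum, map_smul, smul_eq_mul]
  calc |f v| ≤ ∑ j, |v j * f (Pi.single j 1)| := hexpand ▸ Finset.abs_sum_le_sum_abs _ _
    _ ≤ ∑ j, |v j| * c := by gcongr with j; rw [abs_mul]; gcongr; exact hf j
    _ = c * ∑ j, |v j| := by rw [Finset.mul_sum]; simp_rw [mul_comm]

theorem sum_abs_sub_add_le_sum_abs_of_support_subset {ι : Type*} [Fintype ι] [DecidableEq ι]
    {S : Finset ι} {θ₀ : ι → ℝ} (hS : Function.support θ₀ ⊆ S) (θ : ι → ℝ) :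
    ∑ j, |θ₀ j| - ∑ j ∈ S, |θ j - θ₀ j| + ∑ j ∈ Sᶜ, |θ j - θ₀ j| ≤ ∑ j, |θ j| := by
  have hzero : ∀ j ∉ S, θ₀ j = 0 := fun j hj => Function.notMem_support.mp fun h => hj (hS h)
  have hθ₀ : ∑ j, |θ₀ j| = ∑ j ∈ S, |θ₀ j| :=
    (Finset.sum_subset S.subset_univ fun j _ hj => by rw [hzero j hj, abs_zero]).symm
  have hcompl : ∑ j ∈ Sᶜ, |θ j - θ₀ j| = ∑ j ∈ Sᶜ, |θ j| :=
    Finset.sum_congr rfl fun j hj => by rw [hzero j (Finset.mem_compl.mp hj), sub_zero]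
  have honS : ∑ j ∈ S, |θ₀ j| - ∑ j ∈ S, |θ j - θ₀ j| ≤ ∑ j ∈ S, |θ j| := by
    rw [← Finset.sum_sub_distrib]
    exact Finset.sum_le_sum fun j _ => by
      linarith [abs_sub_abs_le_abs_sub (θ₀ j) (θ j), abs_sub_comm (θ₀ j) (θ j)]
  rw [hθ₀, hcompl, ← Finset.sum_add_sum_compl S fun j => |θ j|]
  linarith

/-- Cone condition from the proof of Lemma 3: if `L` is convex and differentiable,
`S ⊇ supp(θ*)`, and `λ ≥ 2‖∇L(θ*)‖_∞` with `λ > 0`, then the error `Δ = θ̂ - θ*` of any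
global minimizer `θ̂` of `L + λ‖·‖₁` satisfies `‖Δ_{S̄}‖₁ ≤ 3‖Δ_S‖₁`. -/
theorem stmt_7 {d : ℕ} (L : (Fin d → ℝ) → ℝ)
    (hconv : ConvexOn ℝ Set.univ L) (hdiff : Differentiable ℝ L)
    (θstar : Fin d → ℝ) (S : Finset (Fin d)) (hS : ∀ j, θstar j ≠ 0 → j ∈ S)
    (lam : ℝ) (hlam_pos : 0 < lam)
    (hlam : ∀ j, 2 * |fderiv ℝ L θstar (Pi.single j 1)| ≤ lam)
    (θhat : Fin d → ℝ)
    (hmin : ∀ θ, L θhat + lam * ∑ j, |θhat j| ≤ L θ + lam * ∑ j, |θ j|) :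
    ∑ j ∈ Sᶜ, |θhat j - θstar j| ≤ 3 * ∑ j ∈ S, |θhat j - θstar j| := by
  set a := ∑ j ∈ S, |θhat j - θstar j|
  set b := ∑ j ∈ Sᶜ, |θhat j - θstar j|
  have hgrad : L θstar + fderiv ℝ L θstar (θhat - θstar) ≤ L θhat :=
    hconv.add_le_of_hasFDerivAt trivial trivial (hdiff θstar).hasFDerivAt
  have hholder : |fderiv ℝ L θstar (θhat - θstar)| ≤ lam / 2 * (a + b) := by
    rw [Finset.sum_add_sum_compl]
    exact LinearMap.abs_apply_le_mul_sum_abs (fderiv ℝ L θstar).toLinearMap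
      (fun j => by rw [ContinuousLinearMap.coe_coe]; linarith [hlam j]) _
  have hbasic : lam * ∑ j, |θhat j| ≤ lam * ∑ j, |θstar j| + lam / 2 * (a + b) := by
    linarith [hmin θstar, neg_abs_le (fderiv ℝ L θstar (θhat - θstar))]
  have hsupport : lam * (∑ j, |θstar j| - a + b) ≤ lam * ∑ j, |θhat j| :=
    mul_le_mul_of_nonneg_left (sum_abs_sub_add_le_sum_abs_of_support_subset hS θhat) hlam_pos.le
  have hcone : lam * (b - 3 * a) ≤ 0 := by linarith
  linarith [nonpos_of_mul_nonpos_right hcone hlam_pos]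
end

section
/- (Lemma 3) Let L : ℝ^d → ℝ be convex and twice continuously differentiable, let θ* ∈ ℝ^d with support S = supp(θ*) and sparsity s₀ = ‖θ*‖₀ ≥ 1, and set γ_n = ‖∇L(θ*)‖_∞. Assume the locally restricted positive definite Hessian condition: there exist r > 0 and β > 0 such that for every θ with ‖θ − θ*‖₂ < r and every v ∈ C_S = {v : ‖v_{S̄}‖₁ ≤ 3‖v_S‖₁}, we have v⊤ ∇²L(θ) v ≥ β‖v‖₂². Let c₀ ≥ 2 and λ ∈ [2γ_n, c₀γ_n] with λ > 0, and set γ = 1.5 c₀ √(s₀) β^{−1} γ_n. If γ < r, then any global minimizer θ̂ of θ ↦ L(θ) + λ‖θ‖₁ satisfies ‖θ̂ − θ*‖₂ ≤ 1.5 c₀ √(s₀) β^{−1} γ_n. -/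
/-!
Put `Δ = θ̂ - θ*`. If `‖Δ‖₂ > γ`, some point `θ* + tΔ` with `t < 1` lies at distance in `(γ, r)`
from `θ*`, so it suffices to show `‖tΔ‖₂ ≤ γ` whenever `‖tΔ‖₂ < r`. For `v = tΔ`, convexity of `L`
and of the penalty together with the minimality of `θ̂` give
`∇L(θ* + v) v ≤ λ (‖θ*‖₁ - ‖θ* + v‖₁) ≤ λ (‖v_S‖₁ - ‖v_S̄‖₁)`, while `∇L(θ*) v ≥ -γₙ ‖v‖₁`.
Monotonicity of `∇L` then puts `v` in the cone `C_S` (this is where `λ ≥ 2γₙ` enters), and the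
Hessian bound along `[θ*, θ* + v]`, which stays in the ball of radius `r`, yields
`β ‖v‖₂² ≤ ∇L(θ* + v) v - ∇L(θ*) v ≤ 1.5 λ ‖v_S‖₁ ≤ 1.5 c₀ γₙ √s₀ ‖v‖₂`.
-/

open Real Set

section Convex

variable {E : Type*} [NormedAddCommGroup E] [NormedSpace ℝ E]

theorem ConvexOn.fderiv_apply_sub_le {f : E → ℝ} (hf : ConvexOn ℝ univ f) {x : E}
    (hx : DifferentiableAt ℝ f x) (y : E) : fderiv ℝ f x (y - x) ≤ f y - f x := by
  have hline : HasDerivAt (f ∘ AffineMap.lineMap (k := ℝ) x y) (fderiv ℝ f x (y - x)) 0 := by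
    refine HasFDerivAt.comp_hasDerivAt (0 : ℝ) ?_ AffineMap.hasDerivAt_lineMap
    simpa using hx.hasFDerivAt
  have := (hf.comp_affineMap (AffineMap.lineMap (k := ℝ) x y)).le_slope_of_hasDerivAt
    (mem_univ 0) (mem_univ 1) one_pos hline
  simpa [slope_def_field] using this

theorem ConvexOn.fderiv_apply_sub_le_fderiv_apply_sub {f : E → ℝ} (hf : ConvexOn ℝ univ f)
    {x y : E} (hx : DifferentiableAt ℝ f x) (hy : DifferentiableAt ℝ f y) :
    fderiv ℝ f x (y - x) ≤ fderiv ℝ f y (y - x) := by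
  have hxy := hf.fderiv_apply_sub_le hx y
  have hyx := hf.fderiv_apply_sub_le hy x
  rw [← neg_sub, map_neg] at hyx
  linarith

theorem ConvexOn.fderiv_apply_le_sub_of_forall_add_le {g h : E → ℝ} (hg : ConvexOn ℝ univ g)
    (hh : ConvexOn ℝ univ h) {x xhat : E} (hmin : ∀ z, g xhat + h xhat ≤ g z + h z) {t : ℝ}
    (ht : t ∈ Ico 0 1) (hdiff : DifferentiableAt ℝ g (x + t • (xhat - x))) :
    fderiv ℝ g (x + t • (xhat - x)) (t • (xhat - x)) ≤ h x - h (x + t • (xhat - x)) := by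
  set y := x + t • (xhat - x)
  set D := fderiv ℝ g y (xhat - x)
  have hgrad : (1 - t) * D ≤ g xhat - g y := by
    have := hg.fderiv_apply_sub_le hdiff xhat
    rwa [show xhat - y = (1 - t) • (xhat - x) by module, map_smul, smul_eq_mul] at this
  have hconv : h y ≤ (1 - t) * h x + t * h xhat := by
    simpa [y, show x + t • (xhat - x) = (1 - t) • x + t • xhat by module] using
      hh.2 (mem_univ x) (mem_univ xhat) (sub_nonneg.2 ht.2.le) ht.1 (by ring)
  have hD : D ≤ h x - h xhat := by
    refine le_of_mul_le_mul_left ?_ (sub_pos.2 ht.2)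
    linarith [hmin y]
  rw [map_smul, smul_eq_mul]
  linarith [mul_le_mul_of_nonneg_left hD ht.1]

theorem ContDiff.fderiv_apply_add_le {f : E → ℝ} (hf : ContDiff ℝ 2 f) (x v : E) {c : ℝ}
    (hc : ∀ s ∈ Ioo (0 : ℝ) 1, c ≤ fderiv ℝ (fderiv ℝ f) (x + s • v) v v) :
    fderiv ℝ f x v + c ≤ fderiv ℝ f (x + v) v := by
  have hdf : Differentiable ℝ (fderiv ℝ f) :=
    (hf.fderiv_right (m := 1) (by norm_num)).differentiable (by norm_num)
  have hderiv : ∀ s : ℝ, HasDerivAt (fun s : ℝ ↦ fderiv ℝ f (x + s • v) v)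
      (fderiv ℝ (fderiv ℝ f) (x + s • v) v v) s := by
    intro s
    have hcurve : HasDerivAt (fun s : ℝ ↦ x + s • v) v s := by
      simpa using ((hasDerivAt_id s).smul_const v).const_add x
    simpa using ((hdf _).hasFDerivAt.comp_hasDerivAt s hcurve).clm_apply (hasDerivAt_const s v)
  obtain ⟨s, hs, hslope⟩ := exists_hasDerivAt_eq_slope _ _ zero_lt_one
    (fun s _ ↦ (hderiv s).continuousAt.continuousWithinAt) (fun s _ ↦ hderiv s)
  have := hc s hs
  simp only [zero_smul, add_zero, one_smul, sub_zero, div_one] at hslope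
  linarith

end Convex

section Coordinates

variable {ι : Type*} [Fintype ι]

theorem convexOn_sum_abs : ConvexOn ℝ univ fun x : ι → ℝ ↦ ∑ j, |x j| := by
  refine ⟨convex_univ, fun x _ y _ a b ha hb _ ↦ ?_⟩
  simp only [Pi.add_apply, Pi.smul_apply, smul_eq_mul, Finset.mul_sum, ← Finset.sum_add_distrib]
  refine Finset.sum_le_sum fun j _ ↦ (abs_add_le _ _).trans_eq ?_
  rw [abs_mul, abs_mul, abs_of_nonneg ha, abs_of_nonneg hb]

theorem ContinuousLinearMap.abs_apply_le_mul_sum_abs [DecidableEq ι] (T : (ι → ℝ) →L[ℝ] ℝ)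
    {γ : ℝ} (hT : ∀ j, |T (Pi.single j 1)| ≤ γ) (w : ι → ℝ) : |T w| ≤ γ * ∑ j, |w j| := by
  have hw : T w = ∑ j, w j * T (Pi.single j 1) := by
    have hsingle : ∀ i : ι, (fun j : ι ↦ if i = j then (1 : ℝ) else 0) = Pi.single i 1 :=
      fun i ↦ funext fun j ↦ by simp [Pi.single_apply, eq_comm]
    simpa [hsingle] using T.toLinearMap.pi_apply_eq_sum_univ w
  rw [hw, Finset.mul_sum]
  refine (Finset.abs_sum_le_sum_abs _ _).trans (Finset.sum_le_sum fun j _ ↦ ?_)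
  rw [abs_mul, mul_comm γ]
  exact mul_le_mul_of_nonneg_left (hT j) (abs_nonneg _)

theorem sum_abs_sub_sum_abs_add_le [DecidableEq ι] {S : Finset ι} {x : ι → ℝ}
    (hx : ∀ j ∉ S, x j = 0) (v : ι → ℝ) :
    ∑ j, |x j| - ∑ j, |x j + v j| ≤ ∑ j ∈ S, |v j| - ∑ j ∈ Sᶜ, |v j| := by
  rw [← Finset.sum_add_sum_compl S, ← Finset.sum_add_sum_compl S fun j ↦ |x j + v j|]
  have hS : ∑ j ∈ S, |x j| - ∑ j ∈ S, |x j + v j| ≤ ∑ j ∈ S, |v j| := by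
    rw [← Finset.sum_sub_distrib]
    exact Finset.sum_le_sum fun j _ ↦ by simpa using abs_sub_abs_le_abs_sub (x j) (x j + v j)
  have hSc : ∑ j ∈ Sᶜ, |x j| - ∑ j ∈ Sᶜ, |x j + v j| = -∑ j ∈ Sᶜ, |v j| := by
    rw [← Finset.sum_sub_distrib, ← Finset.sum_neg_distrib]
    exact Finset.sum_congr rfl fun j hj ↦ by simp [hx j (Finset.mem_compl.1 hj)]
  linarith

theorem sum_abs_le_sqrt_card_mul_sqrt_sum_sq (S : Finset ι) (v : ι → ℝ) :
    ∑ j ∈ S, |v j| ≤ √S.card * √(∑ j, v j ^ 2) := by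
  rw [← sqrt_mul (Nat.cast_nonneg _)]
  refine le_sqrt_of_sq_le ?_
  calc (∑ j ∈ S, |v j|) ^ 2 ≤ S.card * ∑ j ∈ S, |v j| ^ 2 :=
        sq_sum_le_card_mul_sum_sq (s := S) (f := fun j ↦ |v j|)
    _ ≤ (S.card : ℝ) * ∑ j, v j ^ 2 := by
      simp only [sq_abs]
      exact mul_le_mul_of_nonneg_left
        (Finset.sum_le_univ_sum_of_nonneg fun j ↦ sq_nonneg (v j)) (Nat.cast_nonneg _)

theorem sqrt_sum_mul_sq {t : ℝ} (ht : 0 ≤ t) (u : ι → ℝ) :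
    √(∑ j, (t * u j) ^ 2) = t * √(∑ j, u j ^ 2) := by
  simp_rw [mul_pow, ← Finset.mul_sum]
  rw [sqrt_mul (sq_nonneg t), sqrt_sq ht]

end Coordinates

theorem le_of_forall_mul_lt_imp_mul_le {N γ r : ℝ} (hγ : 0 ≤ γ) (hγr : γ < r)
    (h : ∀ t ∈ Ico (0 : ℝ) 1, t * N < r → t * N ≤ γ) : N ≤ γ := by
  by_contra! hN
  obtain ⟨γ', hγγ', hγ'⟩ := exists_between (lt_min hγr hN)
  have hN0 : 0 < N := hγ.trans_lt hN
  have htN : γ' / N * N = γ' := div_mul_cancel₀ _ hN0.ne'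
  have ht : γ' / N ∈ Ico (0 : ℝ) 1 :=
    ⟨div_nonneg (hγ.trans hγγ'.le) hN0.le, (div_lt_one hN0).2 (hγ'.trans_le (min_le_right _ _))⟩
  have := h _ ht (by rw [htN]; exact hγ'.trans_le (min_le_left _ _))
  linarith

theorem lasso_restricted_curvature_bound {ι : Type*} [Fintype ι] [DecidableEq ι]
    {L : (ι → ℝ) → ℝ} (hconv : ConvexOn ℝ univ L) (hsmooth : ContDiff ℝ 2 L)
    {θstar θhat : ι → ℝ} {S : Finset ι} (hS : ∀ j ∉ S, θstar j = 0) {γn r β lam : ℝ}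
    (hγn : ∀ j, |fderiv ℝ L θstar (Pi.single j 1)| ≤ γn)
    (hRSC : ∀ θ : ι → ℝ, √(∑ j, (θ j - θstar j) ^ 2) < r →
      ∀ v : ι → ℝ, ∑ j ∈ Sᶜ, |v j| ≤ 3 * ∑ j ∈ S, |v j| →
        β * ∑ j, v j ^ 2 ≤ fderiv ℝ (fderiv ℝ L) θ v v)
    (hlam_pos : 0 < lam) (hlam : 2 * γn ≤ lam)
    (hmin : ∀ θ, L θhat + lam * ∑ j, |θhat j| ≤ L θ + lam * ∑ j, |θ j|)
    {t : ℝ} (ht : t ∈ Ico 0 1) (htr : √(∑ j, (t * (θhat j - θstar j)) ^ 2) < r) :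
    β * ∑ j, (t * (θhat j - θstar j)) ^ 2 ≤ 3 / 2 * lam * ∑ j ∈ S, |t * (θhat j - θstar j)| := by
  have hdiff : Differentiable ℝ L := hsmooth.differentiable (by norm_num)
  set v := t • (θhat - θstar)
  have hvj : ∀ j, v j = t * (θhat j - θstar j) := fun j ↦ rfl
  simp only [← hvj] at htr ⊢
  set a := ∑ j ∈ S, |v j|
  set b := ∑ j ∈ Sᶜ, |v j|
  have hupper : fderiv ℝ L (θstar + v) v ≤ lam * (a - b) := by
    have hopt := hconv.fderiv_apply_le_sub_of_forall_add_le
      (convexOn_sum_abs.smul hlam_pos.le) (x := θstar) hmin ht (hdiff _)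
    have hdecomp := sum_abs_sub_sum_abs_add_le hS v
    simp only [smul_eq_mul, Pi.add_apply] at hopt
    linarith [mul_le_mul_of_nonneg_left hdecomp hlam_pos.le]
  have hlower : -(γn * (a + b)) ≤ fderiv ℝ L θstar v := by
    have := (fderiv ℝ L θstar).abs_apply_le_mul_sum_abs hγn v
    rw [← Finset.sum_add_sum_compl S] at this
    exact neg_le_of_abs_le this
  have hmono : fderiv ℝ L θstar v ≤ fderiv ℝ L (θstar + v) v := by
    simpa using hconv.fderiv_apply_sub_le_fderiv_apply_sub (hdiff θstar) (hdiff (θstar + v))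
  have ha : 0 ≤ a := Finset.sum_nonneg fun j _ ↦ abs_nonneg _
  have hb : 0 ≤ b := Finset.sum_nonneg fun j _ ↦ abs_nonneg _
  have hcone : b ≤ 3 * a := by
    refine le_of_mul_le_mul_left ?_ (by linarith : 0 < lam - γn)
    nlinarith [mul_nonneg (sub_nonneg.2 hlam) ha]
  have hcurv : fderiv ℝ L θstar v + β * ∑ j, v j ^ 2 ≤ fderiv ℝ L (θstar + v) v := by
    refine hsmooth.fderiv_apply_add_le θstar v fun s hs ↦ hRSC _ ?_ v hcone
    have hs_v : ∀ j, (θstar + s • v) j - θstar j = s * v j := fun j ↦ by simp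
    simp only [hs_v, sqrt_sum_mul_sq hs.1.le]
    exact (mul_le_of_le_one_left (sqrt_nonneg _) hs.2.le).trans_lt htr
  calc β * ∑ j, v j ^ 2 ≤ lam * (a - b) + γn * (a + b) := by linarith
    _ ≤ 3 / 2 * lam * a := by nlinarith [mul_nonneg (sub_nonneg.2 hlam) ha]

theorem stmt_8_general {d : ℕ} (L : (Fin d → ℝ) → ℝ)
    (hconv : ConvexOn ℝ Set.univ L) (hsmooth : ContDiff ℝ 2 L)
    (θstar : Fin d → ℝ)
    (S : Finset (Fin d)) (hS : S = Finset.univ.filter (fun j => θstar j ≠ 0))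
    (s₀ : ℕ) (hs₀def : s₀ = S.card)
    (γn : ℝ) (hγn : γn = ⨆ j, |fderiv ℝ L θstar (Pi.single j 1)|)
    (r β : ℝ) (hβ : 0 < β)
    (hRSC : ∀ θ : Fin d → ℝ, Real.sqrt (∑ j, (θ j - θstar j) ^ 2) < r →
      ∀ v : Fin d → ℝ, (∑ j ∈ Sᶜ, |v j|) ≤ 3 * ∑ j ∈ S, |v j| →
        β * ∑ j, (v j) ^ 2 ≤ fderiv ℝ (fderiv ℝ L) θ v v)
    (c₀ : ℝ) (hc₀ : 2 ≤ c₀)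
    (lam : ℝ) (hlam_pos : 0 < lam) (hlam₁ : 2 * γn ≤ lam) (hlam₂ : lam ≤ c₀ * γn)
    (hγr : 1.5 * c₀ * Real.sqrt s₀ * β⁻¹ * γn < r)
    (θhat : Fin d → ℝ)
    (hmin : ∀ θ, L θhat + lam * ∑ j, |θhat j| ≤ L θ + lam * ∑ j, |θ j|) :
    Real.sqrt (∑ j, (θhat j - θstar j) ^ 2) ≤ 1.5 * c₀ * Real.sqrt s₀ * β⁻¹ * γn := by
  have hθS : ∀ j ∉ S, θstar j = 0 := fun j hj ↦ by simpa [hS] using hj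
  have hγn_le : ∀ j, |fderiv ℝ L θstar (Pi.single j 1)| ≤ γn :=
    hγn ▸ le_ciSup (Set.finite_range _).bddAbove
  have hγn0 : 0 ≤ γn := hγn ▸ Real.iSup_nonneg fun j ↦ abs_nonneg _
  have hγ0 : 0 ≤ 1.5 * c₀ * √s₀ * β⁻¹ * γn := by
    have : 0 ≤ c₀ := by linarith
    positivity
  refine le_of_forall_mul_lt_imp_mul_le hγ0 hγr fun t ht htr ↦ ?_
  rw [← sqrt_sum_mul_sq ht.1] at htr ⊢
  have hbasic :=
    lasso_restricted_curvature_bound hconv hsmooth hθS hγn_le hRSC hlam_pos hlam₁ hmin ht htr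
  have hCS := sum_abs_le_sqrt_card_mul_sqrt_sum_sq S fun j ↦ t * (θhat j - θstar j)
  rw [← hs₀def] at hCS
  set n := √(∑ j, (t * (θhat j - θstar j)) ^ 2)
  have hn : n ^ 2 = ∑ j, (t * (θhat j - θstar j)) ^ 2 := sq_sqrt (by positivity)
  rw [← hn] at hbasic
  have hquad : β * n ^ 2 ≤ 1.5 * c₀ * √s₀ * γn * n :=
    calc β * n ^ 2 ≤ 3 / 2 * lam * ∑ j ∈ S, |t * (θhat j - θstar j)| := hbasic
      _ ≤ 3 / 2 * (c₀ * γn) * (√s₀ * n) := by gcongr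
      _ = 1.5 * c₀ * √s₀ * γn * n := by ring
  rcases (show 0 ≤ n from sqrt_nonneg _).eq_or_lt with hn0 | hn0
  · rw [← hn0]; exact hγ0
  rw [show 1.5 * c₀ * √s₀ * β⁻¹ * γn = 1.5 * c₀ * √s₀ * γn / β by field_simp, le_div_iff₀ hβ]
  nlinarith

/-- (Lemma 3) Estimation error bound for the ℓ₁-penalized M-estimator under the locally
restricted positive definite Hessian condition:
`‖θ̂ - θ*‖₂ ≤ 1.5 c₀ √s₀ β⁻¹ γ_n` whenever `γ = 1.5 c₀ √s₀ β⁻¹ γ_n < r`. -/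
theorem stmt_8 {d : ℕ} (L : (Fin d → ℝ) → ℝ)
    (hconv : ConvexOn ℝ Set.univ L) (hsmooth : ContDiff ℝ 2 L)
    (θstar : Fin d → ℝ)
    (S : Finset (Fin d)) (hS : S = Finset.univ.filter (fun j => θstar j ≠ 0))
    (s₀ : ℕ) (hs₀def : s₀ = S.card) (hs₀ : 1 ≤ s₀)
    (γn : ℝ) (hγn : γn = ⨆ j, |fderiv ℝ L θstar (Pi.single j 1)|)
    (r β : ℝ) (hr : 0 < r) (hβ : 0 < β)
    (hRSC : ∀ θ : Fin d → ℝ, Real.sqrt (∑ j, (θ j - θstar j) ^ 2) < r →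
      ∀ v : Fin d → ℝ, (∑ j ∈ Sᶜ, |v j|) ≤ 3 * ∑ j ∈ S, |v j| →
        β * ∑ j, (v j) ^ 2 ≤ fderiv ℝ (fderiv ℝ L) θ v v)
    (c₀ : ℝ) (hc₀ : 2 ≤ c₀)
    (lam : ℝ) (hlam_pos : 0 < lam) (hlam₁ : 2 * γn ≤ lam) (hlam₂ : lam ≤ c₀ * γn)
    (hγr : 1.5 * c₀ * Real.sqrt s₀ * β⁻¹ * γn < r)
    (θhat : Fin d → ℝ)
    (hmin : ∀ θ, L θhat + lam * ∑ j, |θhat j| ≤ L θ + lam * ∑ j, |θ j|) :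
    Real.sqrt (∑ j, (θhat j - θstar j) ^ 2) ≤ 1.5 * c₀ * Real.sqrt s₀ * β⁻¹ * γn :=
  stmt_8_general L hconv hsmooth θstar S hS s₀ hs₀def γn hγn r β hβ hRSC c₀ hc₀ lam hlam_pos hlam₁
    hlam₂ hγr θhat hmin
end
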